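/- arXiv:1002.3460 — 2 statements merged into one kernel-verified Lean document; each statement's English description precedes it below -/
import Mathlib

section
/- Let ρ, ρ̂ ∈ (0,1) with ρ̂ < ρ, let C, Ĉ > 0 and α, β, α̂, β̂ ∈ ℝ. Let U, Û be locally finite Borel measures on [0,∞) and L, L̂ be slowly varying at 0⁺ with U([0,x])/(x^ρ L(x)) → 1 and Û([0,x])/(x^{ρ̂} L̂(x)) → 1 as x → 0⁺. Define Ψ(x) := C ∫_{[0,x]} e^{(α−β)y} U(dy) and Ψ̂(x) := Ĉ ∫_{[0,x]} e^{(α̂−β̂)y} Û(dy). Then (Ψ(x) − Ψ̂(x))/(x^{ρ̂} L̂(x)) → −Ĉ as x → 0⁺. -/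
/-!
Write `F(x) = U([0,x])` and `G(x) = Û([0,x])`. The exponential weights tend to `1` on `[0,x]`,
so `Ψ ~ C F` and `Ψ̂ ~ Ĉ G`, and it remains to show `F/G → 0`. Regular and slow variation give
`F(x/2)/F(x) → 2^{-ρ}` and `G(x/2)/G(x) → 2^{-ρ̂}`, so near `0` the ratio `h = F/G` satisfies
`h(x/2) ≤ r h(x)` for some `r < 1`. Iterating this along dyadic scales, and bounding `h` on one
dyadic block by monotonicity of `F` and `G`, gives `h → 0`; monotonicity thus replaces the
Potter bounds for `L` that a direct comparison of `x^ρ L(x)` with `x^ρ̂ L̂(x)` would need.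
-/

open Filter Topology MeasureTheory Set

/-- A function `L : (0,∞) → (0,∞)` is slowly varying at `0⁺` if for every `l > 0`,
`L(l·x)/L(x) → 1` as `x → 0⁺`. -/
def SlowlyVaryingAtZero (L : ℝ → ℝ) : Prop :=
  ∀ l : ℝ, 0 < l → Tendsto (fun x : ℝ => L (l * x) / L x) (𝓝[>] 0) (𝓝 1)

theorem tendsto_const_mul_nhdsGT_zero {c : ℝ} (hc : 0 < c) :
    Tendsto (c * ·) (𝓝[>] 0) (𝓝[>] 0) :=
  tendsto_iff_comap.2 (comap_mulLeft_nhdsGT_zero hc).ge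

theorem exists_mem_Ioc_div_two_pow {δ x : ℝ} (hx : x ∈ Ioc 0 δ) :
    ∃ n : ℕ, x ∈ Ioc (δ / 2 ^ (n + 1)) (δ / 2 ^ n) := by
  obtain ⟨n, hn, hn'⟩ := exists_nat_pow_near ((one_le_div hx.1).2 hx.2) one_lt_two
  exact ⟨n, (div_lt_iff₀' (by positivity)).2 ((div_lt_iff₀ hx.1).1 hn'),
    (le_div_iff₀' (by positivity)).2 ((le_div_iff₀ hx.1).1 hn)⟩

theorem tendsto_nhdsGT_zero_of_le_mul_half {h : ℝ → ℝ} {r δ M : ℝ} (hr0 : 0 ≤ r) (hr1 : r < 1)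
    (hδ : 0 < δ) (h0 : ∀ x ∈ Ioc 0 δ, 0 ≤ h x) (hhalf : ∀ x ∈ Ioc 0 δ, h (x / 2) ≤ r * h x)
    (hM : ∀ x ∈ Ioc (δ / 2) δ, h x ≤ M) :
    Tendsto h (𝓝[>] 0) (𝓝 0) := by
  have hdyadic : ∀ n : ℕ, ∀ x ∈ Ioc (δ / 2 ^ (n + 1)) (δ / 2 ^ n), h x ≤ M * r ^ n := by
    intro n
    induction n with
    | zero => simpa using hM
    | succ n ih =>
      intro x hx
      have hpow : ∀ k : ℕ, δ / 2 ^ (k + 1) = δ / 2 ^ k / 2 := fun k => by rw [pow_succ, div_div]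
      rw [hpow] at hx
      have hδn : δ / 2 ^ n ≤ δ := div_le_self hδ.le (one_le_pow₀ one_le_two)
      have h2x : 2 * x ∈ Ioc (δ / 2 ^ (n + 1)) (δ / 2 ^ n) := by
        constructor <;> linarith [hx.1, hx.2, hpow n]
      calc h x = h (2 * x / 2) := by rw [mul_div_cancel_left₀ _ two_ne_zero]
        _ ≤ r * h (2 * x) := hhalf _ ⟨(div_pos hδ (pow_pos two_pos _)).trans h2x.1, h2x.2.trans hδn⟩
        _ ≤ r * (M * r ^ n) := mul_le_mul_of_nonneg_left (ih _ h2x) hr0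
        _ = M * r ^ (n + 1) := by ring
  have hM0 : 0 ≤ M := (h0 δ ⟨hδ, le_rfl⟩).trans (hM δ ⟨half_lt_self hδ, le_rfl⟩)
  refine tendsto_order.2 ⟨fun a ha => ?_, fun a ha => ?_⟩
  · filter_upwards [Ioc_mem_nhdsGT hδ] with x hx using ha.trans_le (h0 x hx)
  · obtain ⟨N, hN⟩ := (((tendsto_pow_atTop_nhds_zero_of_lt_one hr0 hr1).const_mul M).eventually
      (gt_mem_nhds (by simpa using ha))).exists
    filter_upwards [Ioc_mem_nhdsGT (show 0 < δ / 2 ^ N by positivity)] with x hx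
    obtain ⟨n, hn⟩ := exists_mem_Ioc_div_two_pow
      ⟨hx.1, hx.2.trans (div_le_self hδ.le (one_le_pow₀ one_le_two))⟩
    have hNn : N ≤ n := by
      have h2 := (div_lt_div_iff_of_pos_left hδ (by positivity) (by positivity)).1
        (hn.1.trans_le hx.2)
      have := (pow_lt_pow_iff_right₀ one_lt_two).1 h2
      omega
    calc h x ≤ M * r ^ n := hdyadic n x hn
      _ ≤ M * r ^ N := mul_le_mul_of_nonneg_left (pow_le_pow_of_le_one hr0 hr1.le hNn) hM0
      _ < a := hN

theorem tendsto_div_nhdsGT_zero_of_monotone {f g : ℝ → ℝ} (hf : Monotone f) (hg : Monotone g)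
    (hf0 : ∀ᶠ x in 𝓝[>] 0, 0 < f x) (hg0 : ∀ᶠ x in 𝓝[>] 0, 0 < g x) {a b : ℝ} (hab : a < b)
    (hfa : Tendsto (fun x => f (x / 2) / f x) (𝓝[>] 0) (𝓝 a))
    (hgb : Tendsto (fun x => g (x / 2) / g x) (𝓝[>] 0) (𝓝 b)) :
    Tendsto (fun x => f x / g x) (𝓝[>] 0) (𝓝 0) := by
  have ha : 0 ≤ a := by
    refine ge_of_tendsto hfa ?_
    have hhalf : Tendsto (· / 2) (𝓝[>] (0 : ℝ)) (𝓝[>] 0) := by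
      simpa only [inv_mul_eq_div] using tendsto_const_mul_nhdsGT_zero (inv_pos.2 two_pos)
    filter_upwards [hhalf.eventually hf0, hf0] with x h1 h2 using (div_pos h1 h2).le
  obtain ⟨p, hap, hpb⟩ := exists_between hab
  obtain ⟨q, hpq, hqb⟩ := exists_between hpb
  have hp : 0 < p := ha.trans_lt hap
  have hq : 0 < q := hp.trans hpq
  have hev : ∀ᶠ x in 𝓝[>] 0, 0 < f x ∧ 0 < g x ∧ f (x / 2) ≤ p * f x ∧ q * g x ≤ g (x / 2) := by
    filter_upwards [hf0, hg0, hfa.eventually_lt_const hap, hgb.eventually_const_lt hqb]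
      with x hfx hgx hfp hgq
    exact ⟨hfx, hgx, ((div_lt_iff₀ hfx).1 hfp).le, ((lt_div_iff₀ hgx).1 hgq).le⟩
  obtain ⟨δ, hδ, hδsub⟩ := mem_nhdsGT_iff_exists_Ioc_subset.1 hev
  refine tendsto_nhdsGT_zero_of_le_mul_half (r := p / q) (M := f δ / g (δ / 2)) (by positivity)
    ((div_lt_one hq).2 hpq) hδ (fun x hx => (div_pos (hδsub hx).1 (hδsub hx).2.1).le)
    (fun x hx => ?_) (fun x hx => ?_)
  · obtain ⟨hfx, hgx, hfp, hgq⟩ := hδsub hx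
    calc f (x / 2) / g (x / 2) ≤ p * f x / (q * g x) :=
          div_le_div₀ (by positivity) hfp (by positivity) hgq
      _ = p / q * (f x / g x) := mul_div_mul_comm _ _ _ _
  · exact div_le_div₀ (hδsub ⟨hδ, le_rfl⟩).1.le (hf hx.2)
      (hδsub ⟨half_pos hδ, half_le_self hδ.le⟩).2.1 (hg hx.1.le)

theorem tendsto_comp_mul_div_of_tendsto_div_rpow_mul {f L : ℝ → ℝ} {ρ c : ℝ} (hc : 0 < c)
    (hL0 : ∀ x, 0 < x → 0 < L x) (hL : SlowlyVaryingAtZero L)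
    (hf : Tendsto (fun x => f x / (x ^ ρ * L x)) (𝓝[>] 0) (𝓝 1)) :
    Tendsto (fun x => f (c * x) / f x) (𝓝[>] 0) (𝓝 (c ^ ρ)) := by
  have hlim := ((hf.comp (tendsto_const_mul_nhdsGT_zero hc)).mul
    ((tendsto_const_nhds (x := c ^ ρ)).mul (hL c hc))).mul (hf.inv₀ one_ne_zero)
  rw [one_mul, mul_one, inv_one, mul_one] at hlim
  refine hlim.congr' ?_
  filter_upwards [self_mem_nhdsWithin] with x (hx : 0 < x)
  have hLx := hL0 x hx
  have hLcx := hL0 (c * x) (by positivity)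
  have hcρ : 0 < c ^ ρ := Real.rpow_pos_of_pos hc ρ
  have hxρ : 0 < x ^ ρ := Real.rpow_pos_of_pos hx ρ
  simp only [Function.comp_apply, Real.mul_rpow hc.le hx.le, inv_div]
  field_simp

theorem eventually_pos_of_tendsto_div_rpow_mul {f L : ℝ → ℝ} {ρ : ℝ}
    (hL0 : ∀ x, 0 < x → 0 < L x) (hf : Tendsto (fun x => f x / (x ^ ρ * L x)) (𝓝[>] 0) (𝓝 1)) :
    ∀ᶠ x in 𝓝[>] 0, 0 < f x := by
  filter_upwards [self_mem_nhdsWithin, hf.eventually_const_lt one_pos] with x (hx : 0 < x) hfx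
  exact (div_pos_iff_of_pos_right (mul_pos (Real.rpow_pos_of_pos hx ρ) (hL0 x hx))).1 hfx

theorem tendsto_div_nhdsGT_zero_of_tendsto_div_rpow_mul {f g L L' : ℝ → ℝ} {ρ ρ' : ℝ}
    (hf : Monotone f) (hg : Monotone g) (hL0 : ∀ x, 0 < x → 0 < L x)
    (hL'0 : ∀ x, 0 < x → 0 < L' x) (hL : SlowlyVaryingAtZero L) (hL' : SlowlyVaryingAtZero L')
    (hfL : Tendsto (fun x => f x / (x ^ ρ * L x)) (𝓝[>] 0) (𝓝 1))
    (hgL' : Tendsto (fun x => g x / (x ^ ρ' * L' x)) (𝓝[>] 0) (𝓝 1)) (hρ : ρ' < ρ) :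
    Tendsto (fun x => f x / g x) (𝓝[>] 0) (𝓝 0) := by
  have hhalf {F M : ℝ → ℝ} {σ : ℝ} (hM0 : ∀ x, 0 < x → 0 < M x) (hM : SlowlyVaryingAtZero M)
      (hFM : Tendsto (fun x => F x / (x ^ σ * M x)) (𝓝[>] 0) (𝓝 1)) :
      Tendsto (fun x => F (x / 2) / F x) (𝓝[>] 0) (𝓝 (2⁻¹ ^ σ)) := by
    simpa only [inv_mul_eq_div] using
      tendsto_comp_mul_div_of_tendsto_div_rpow_mul (inv_pos.2 two_pos) hM0 hM hFM
  exact tendsto_div_nhdsGT_zero_of_monotone hf hg (eventually_pos_of_tendsto_div_rpow_mul hL0 hfL)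
    (eventually_pos_of_tendsto_div_rpow_mul hL'0 hgL')
    (Real.rpow_lt_rpow_of_exponent_gt (by norm_num) (by norm_num) hρ)
    (hhalf hL0 hL hfL) (hhalf hL'0 hL' hgL')

theorem monotone_toReal_measure_Icc (ν : Measure ℝ) [IsLocallyFiniteMeasure ν] (a : ℝ) :
    Monotone fun x => (ν (Icc a x)).toReal := fun _ _ hxy =>
  ENNReal.toReal_mono measure_Icc_lt_top.ne (measure_mono (Icc_subset_Icc_right hxy))

theorem tendsto_setIntegral_Icc_div_measure (ν : Measure ℝ) [IsLocallyFiniteMeasure ν]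
    {φ : ℝ → ℝ} (hφ : Continuous φ) (a : ℝ) (hν : ∀ᶠ x in 𝓝[>] a, ν (Icc a x) ≠ 0) :
    Tendsto (fun x => (∫ y in Icc a x, φ y ∂ν) / (ν (Icc a x)).toReal) (𝓝[>] a) (𝓝 (φ a)) := by
  rw [Metric.tendsto_nhds]
  intro ε hε
  obtain ⟨δ, hδ, hφδ⟩ := Metric.continuous_iff.1 hφ a (ε / 2) (half_pos hε)
  filter_upwards [hν, Ioo_mem_nhdsGT (show a < a + δ by linarith)] with x hνx hx
  have hpos : 0 < ν.real (Icc a x) := ENNReal.toReal_pos hνx measure_Icc_lt_top.ne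
  have hint : ∫ y in Icc a x, φ y ∂ν - ν.real (Icc a x) * φ a = ∫ y in Icc a x, (φ y - φ a) ∂ν := by
    rw [integral_sub hφ.integrableOn_Icc (integrableOn_const measure_Icc_lt_top.ne),
      setIntegral_const, smul_eq_mul]
  have hbound : ‖∫ y in Icc a x, (φ y - φ a) ∂ν‖ ≤ ε / 2 * ν.real (Icc a x) := by
    refine norm_setIntegral_le_of_norm_le_const measure_Icc_lt_top fun y hy => ?_
    refine (hφδ y ?_).le
    rw [Real.dist_eq, abs_of_nonneg (by linarith [hy.1])]
    linarith [hy.2, hx.2]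
  calc dist ((∫ y in Icc a x, φ y ∂ν) / ν.real (Icc a x)) (φ a)
      = ‖∫ y in Icc a x, (φ y - φ a) ∂ν‖ / ν.real (Icc a x) := by
        rw [dist_eq_norm, div_sub' hpos.ne', hint, norm_div, Real.norm_of_nonneg hpos.le]
    _ ≤ ε / 2 := (div_le_iff₀ hpos).2 hbound
    _ < ε := half_lt_self hε

theorem Psi_diff_tendsto_neg_Ch_of_rhoh_lt_rho_general
    (rho rhoh : ℝ)
    (hlt : rhoh < rho)
    (C Ch : ℝ)
    (alpha beta alphah betah : ℝ)
    (U Uh : Measure ℝ) [IsLocallyFiniteMeasure U] [IsLocallyFiniteMeasure Uh]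
    (L Lh : ℝ → ℝ)
    (hLpos : ∀ x : ℝ, 0 < x → 0 < L x) (hLhpos : ∀ x : ℝ, 0 < x → 0 < Lh x)
    (hLsv : SlowlyVaryingAtZero L) (hLhsv : SlowlyVaryingAtZero Lh)
    (hU : Tendsto (fun x : ℝ => (U (Set.Icc 0 x)).toReal / (x ^ rho * L x))
      (𝓝[>] 0) (𝓝 1))
    (hUh : Tendsto (fun x : ℝ => (Uh (Set.Icc 0 x)).toReal / (x ^ rhoh * Lh x))
      (𝓝[>] 0) (𝓝 1))
    (Psi Psih : ℝ → ℝ)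
    (hPsi : ∀ x : ℝ, Psi x = C * ∫ y in Set.Icc 0 x, Real.exp ((alpha - beta) * y) ∂U)
    (hPsih : ∀ x : ℝ,
      Psih x = Ch * ∫ y in Set.Icc 0 x, Real.exp ((alphah - betah) * y) ∂Uh) :
    Tendsto (fun x : ℝ => (Psi x - Psih x) / (x ^ rhoh * Lh x)) (𝓝[>] 0) (𝓝 (-Ch)) := by
  have hUpos := eventually_pos_of_tendsto_div_rpow_mul hLpos hU
  have hUhpos := eventually_pos_of_tendsto_div_rpow_mul hLhpos hUh
  have hUUh : Tendsto (fun x => (U (Icc 0 x)).toReal / (Uh (Icc 0 x)).toReal) (𝓝[>] 0) (𝓝 0) :=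
    tendsto_div_nhdsGT_zero_of_tendsto_div_rpow_mul (monotone_toReal_measure_Icc U 0)
      (monotone_toReal_measure_Icc Uh 0) hLpos hLhpos hLsv hLhsv hU hUh hlt
  have hPsiU : Tendsto (fun x => Psi x / (U (Icc 0 x)).toReal) (𝓝[>] 0) (𝓝 C) := by
    simpa [hPsi, mul_div_assoc] using (tendsto_setIntegral_Icc_div_measure U
      (φ := fun y => Real.exp ((alpha - beta) * y)) (by fun_prop) 0
      (hUpos.mono fun _ hx => (ENNReal.toReal_pos_iff.1 hx).1.ne')).const_mul C
  have hPsihUh : Tendsto (fun x => Psih x / (Uh (Icc 0 x)).toReal) (𝓝[>] 0) (𝓝 Ch) := by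
    simpa [hPsih, mul_div_assoc] using (tendsto_setIntegral_Icc_div_measure Uh
      (φ := fun y => Real.exp ((alphah - betah) * y)) (by fun_prop) 0
      (hUhpos.mono fun _ hx => (ENNReal.toReal_pos_iff.1 hx).1.ne')).const_mul Ch
  have hlim := ((hPsiU.mul hUUh).sub hPsihUh).mul hUh
  rw [mul_zero, zero_sub, mul_one] at hlim
  refine hlim.congr' ?_
  filter_upwards [hUpos, hUhpos] with x hx hxh
  field_simp

/-- second limit case of Lemma 4.1 of the paper. If `ρ̂ < ρ` then
`(Ψ(x) − Ψ̂(x))/(x^ρ̂ L̂(x)) → −Ĉ` as `x → 0⁺`. -/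
theorem Psi_diff_tendsto_neg_Ch_of_rhoh_lt_rho
    (rho rhoh : ℝ) (hrho : rho ∈ Set.Ioo (0:ℝ) 1) (hrhoh : rhoh ∈ Set.Ioo (0:ℝ) 1)
    (hlt : rhoh < rho)
    (C Ch : ℝ) (hC : 0 < C) (hCh : 0 < Ch)
    (alpha beta alphah betah : ℝ)
    (U Uh : Measure ℝ) [IsLocallyFiniteMeasure U] [IsLocallyFiniteMeasure Uh]
    (hU0 : U (Set.Iio 0) = 0) (hUh0 : Uh (Set.Iio 0) = 0)
    (L Lh : ℝ → ℝ)
    (hLpos : ∀ x : ℝ, 0 < x → 0 < L x) (hLhpos : ∀ x : ℝ, 0 < x → 0 < Lh x)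
    (hLsv : SlowlyVaryingAtZero L) (hLhsv : SlowlyVaryingAtZero Lh)
    (hU : Tendsto (fun x : ℝ => (U (Set.Icc 0 x)).toReal / (x ^ rho * L x))
      (𝓝[>] 0) (𝓝 1))
    (hUh : Tendsto (fun x : ℝ => (Uh (Set.Icc 0 x)).toReal / (x ^ rhoh * Lh x))
      (𝓝[>] 0) (𝓝 1))
    (Psi Psih : ℝ → ℝ)
    (hPsi : ∀ x : ℝ, Psi x = C * ∫ y in Set.Icc 0 x, Real.exp ((alpha - beta) * y) ∂U)
    (hPsih : ∀ x : ℝ,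
      Psih x = Ch * ∫ y in Set.Icc 0 x, Real.exp ((alphah - betah) * y) ∂Uh) :
    Tendsto (fun x : ℝ => (Psi x - Psih x) / (x ^ rhoh * Lh x)) (𝓝[>] 0) (𝓝 (-Ch)) :=
  Psi_diff_tendsto_neg_Ch_of_rhoh_lt_rho_general rho rhoh hlt C Ch alpha beta alphah betah U Uh L Lh
    hLpos hLhpos hLsv hLhsv hU hUh Psi Psih hPsi hPsih
end

section
/- Let ρ̂ ∈ (0,1), Ĉ > 0, let L̂ be slowly varying at 0⁺, and let ψ̂ : (0,∞) → (0,∞) be nondecreasing with ψ̂(x)/(Ĉ x^{ρ̂} L̂(x)) → 1 as x → 0⁺ (and set ψ̂(0) := 0). Then for every b > 0 and ε > 0 there exists x₀ > 0 such that for all x ∈ (0, x₀] and all y ∈ [0, b]: | ψ̂(x y)/(Ĉ x^{ρ̂} L̂(x)) − y^{ρ̂} | ≤ ε. -/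
/-!
For `c > 0`, `ψ̂(xc) / (Ĉ x^ρ̂ L̂(x))` factors as `ψ̂(xc) / (Ĉ (xc)^ρ̂ L̂(xc))` times
`c^ρ̂ L̂(cx) / L̂(x)`, so it tends to `c^ρ̂`; at `c = 0` both sides vanish. For each `x` the
function `y ↦ ψ̂(xy) / (Ĉ x^ρ̂ L̂(x))` is nondecreasing, and pointwise convergence of monotone
functions to a continuous limit is uniform on compact intervals (Pólya): convergence is uniform on
a fine finite grid, and between neighbouring grid points `s ≤ y ≤ t` monotonicity sandwiches the
value at `y` between those at `s` and `t`, while uniform continuity keeps `s^ρ̂` and `t^ρ̂` close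
to `y^ρ̂`.
-/

open Filter Topology Set

theorem tendsto_mul_const_nhdsGT_zero {c : ℝ} (hc : 0 < c) :
    Tendsto (fun x : ℝ => x * c) (𝓝[>] 0) (𝓝[>] 0) :=
  tendsto_nhdsWithin_iff.2
    ⟨by simpa using (tendsto_id.mul_const c).mono_left (nhdsWithin_le_nhds (a := (0 : ℝ))),
      eventually_nhdsWithin_of_forall fun _ hx => mul_pos hx hc⟩

theorem SlowlyVaryingAtZero.tendsto_rpow_mul_div {L : ℝ → ℝ} (hL : SlowlyVaryingAtZero L)
    (hL0 : ∀ x, 0 < x → L x ≠ 0) {C : ℝ} (hC : C ≠ 0) (ρ : ℝ) {c : ℝ} (hc : 0 < c) :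
    Tendsto (fun x => C * (x * c) ^ ρ * L (x * c) / (C * x ^ ρ * L x)) (𝓝[>] 0)
      (𝓝 (c ^ ρ)) := by
  have hlim := (hL c hc).const_mul (c ^ ρ)
  rw [mul_one] at hlim
  refine hlim.congr' ?_
  filter_upwards [self_mem_nhdsWithin] with x (hx : 0 < x)
  have := hL0 x hx
  rw [Real.mul_rpow hx.le hc.le, mul_comm x c]
  field_simp

theorem tendsto_comp_mul_div_of_tendsto_div {ψ φ : ℝ → ℝ}
    (hψφ : Tendsto (fun x => ψ x / φ x) (𝓝[>] 0) (𝓝 1)) (hφ : ∀ x, 0 < x → φ x ≠ 0)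
    {c r : ℝ} (hc : 0 < c) (hφc : Tendsto (fun x => φ (x * c) / φ x) (𝓝[>] 0) (𝓝 r)) :
    Tendsto (fun x => ψ (x * c) / φ x) (𝓝[>] 0) (𝓝 r) := by
  have hlim := (hψφ.comp (tendsto_mul_const_nhdsGT_zero hc)).mul hφc
  rw [one_mul] at hlim
  refine hlim.congr' ?_
  filter_upwards [self_mem_nhdsWithin] with x (hx : 0 < x)
  exact div_mul_div_cancel₀ (hφ _ (mul_pos hx hc))

theorem exists_finite_bracketing_Icc (a b : ℝ) {h : ℝ} (hh : 0 < h) :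
    ∃ G : Set ℝ, G.Finite ∧ G ⊆ Icc a b ∧
      ∀ y ∈ Icc a b, ∃ s ∈ G, ∃ t ∈ G, s ≤ y ∧ y ≤ t ∧ t - s ≤ h := by
  set p : ℕ → ℝ := fun i => min b (a + i * h)
  refine ⟨Icc a b ∩ p '' Iic (⌊(b - a) / h⌋₊ + 1), ((finite_Iic _).image p).inter_of_right _,
    inter_subset_left, fun y ⟨hay, hyb⟩ => ?_⟩
  set k := ⌊(y - a) / h⌋₊
  have hky : k * h ≤ y - a :=
    (le_div_iff₀ hh).1 (Nat.floor_le (div_nonneg (sub_nonneg.2 hay) hh.le))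
  have hyk : y - a < (k + 1) * h := (div_lt_iff₀ hh).1 (Nat.lt_floor_add_one _)
  have hkb : k ≤ ⌊(b - a) / h⌋₊ := Nat.floor_le_floor (by gcongr)
  have hs : p k = a + k * h := min_eq_right (by linarith)
  have ht : p (k + 1) = min b (a + (k + 1) * h) := by simp only [p]; push_cast; rfl
  have hk0 : (0 : ℝ) ≤ k * h := by positivity
  refine ⟨p k, ⟨⟨by linarith, by linarith⟩, k, by simp; omega, rfl⟩,
    p (k + 1), ⟨⟨by rw [ht]; exact le_min (by linarith) (by linarith), min_le_left _ _⟩,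
      k + 1, by simp; omega, rfl⟩, by linarith, by rw [ht]; exact le_min hyb (by linarith), ?_⟩
  rw [hs, ht]
  linarith [min_le_right b (a + (k + 1) * h)]

theorem tendstoUniformlyOn_Icc_of_monotoneOn {ι : Type*} {l : Filter ι} {F : ι → ℝ → ℝ}
    {g : ℝ → ℝ} {a b : ℝ} (hF : ∀ᶠ i in l, MonotoneOn (F i) (Icc a b))
    (hg : ContinuousOn g (Icc a b)) (hFg : ∀ y ∈ Icc a b, Tendsto (F · y) l (𝓝 (g y))) :
    TendstoUniformlyOn F g l (Icc a b) := by
  rw [Metric.tendstoUniformlyOn_iff]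
  intro ε hε
  obtain ⟨δ, hδ, hgδ⟩ := Metric.uniformContinuousOn_iff_le.1
    (isCompact_Icc.uniformContinuousOn_of_continuous hg) (ε / 2) (half_pos hε)
  obtain ⟨G, hGfin, hGab, hG⟩ := exists_finite_bracketing_Icc a b hδ
  have hFG : ∀ᶠ i in l, ∀ p ∈ G, dist (g p) (F i p) < ε / 2 :=
    (eventually_all_finite hGfin).2 fun p hp =>
      (Metric.tendsto_nhds.1 (hFg p (hGab hp)) _ (half_pos hε)).mono fun _ h => by
        rwa [dist_comm]
  filter_upwards [hF, hFG] with i hmono hclose y hy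
  obtain ⟨s, hsG, t, htG, hsy, hyt, hts⟩ := hG y hy
  have hFs := hmono (hGab hsG) hy hsy
  have hFt := hmono hy (hGab htG) hyt
  have hgs := hgδ y hy s (hGab hsG) (by rw [Real.dist_eq, abs_of_nonneg] <;> linarith)
  have hgt := hgδ y hy t (hGab htG) (by rw [Real.dist_eq, abs_of_nonpos] <;> linarith)
  have hs := hclose s hsG
  have ht := hclose t htG
  rw [Real.dist_eq, abs_le] at hgs hgt
  rw [Real.dist_eq, abs_lt] at hs ht ⊢
  constructor <;> linarith

theorem uniform_regular_variation_estimate_general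
    (rhoh : ℝ) (hrhoh : rhoh ∈ Set.Ioo (0:ℝ) 1)
    (Ch : ℝ) (hCh : 0 < Ch)
    (Lh : ℝ → ℝ) (hLhpos : ∀ x : ℝ, 0 < x → 0 < Lh x)
    (hLhsv : SlowlyVaryingAtZero Lh)
    (psih : ℝ → ℝ)
    (hpsih0 : psih 0 = 0)
    (hpsihmono : MonotoneOn psih (Set.Ici (0:ℝ)))
    (hpsih : Tendsto (fun x : ℝ => psih x / (Ch * x ^ rhoh * Lh x)) (𝓝[>] 0) (𝓝 1)) :
    ∀ b : ℝ, 0 < b → ∀ ε : ℝ, 0 < ε → ∃ x₀ : ℝ, 0 < x₀ ∧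
      ∀ x : ℝ, x ∈ Set.Ioc 0 x₀ → ∀ y : ℝ, y ∈ Set.Icc 0 b →
        |psih (x * y) / (Ch * x ^ rhoh * Lh x) - y ^ rhoh| ≤ ε := by
  intro b _ ε hε
  have hD : ∀ x, 0 < x → 0 < Ch * x ^ rhoh * Lh x := fun x hx =>
    mul_pos (mul_pos hCh (Real.rpow_pos_of_pos hx _)) (hLhpos x hx)
  have hmono : ∀ᶠ x in 𝓝[>] (0 : ℝ),
      MonotoneOn (fun y => psih (x * y) / (Ch * x ^ rhoh * Lh x)) (Icc 0 b) := by
    filter_upwards [self_mem_nhdsWithin] with x (hx : 0 < x) y hy z hz hyz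
    have := hpsihmono (mul_nonneg hx.le hy.1) (mul_nonneg hx.le hz.1)
      (mul_le_mul_of_nonneg_left hyz hx.le)
    exact div_le_div_of_nonneg_right this (hD x hx).le
  have hpointwise : ∀ y ∈ Icc (0 : ℝ) b,
      Tendsto (fun x => psih (x * y) / (Ch * x ^ rhoh * Lh x)) (𝓝[>] 0) (𝓝 (y ^ rhoh)) := by
    rintro y ⟨hy, -⟩
    rcases hy.eq_or_lt with rfl | hy
    · simp [hpsih0, Real.zero_rpow hrhoh.1.ne']
    · exact tendsto_comp_mul_div_of_tendsto_div hpsih (fun x hx => (hD x hx).ne') hy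
        (hLhsv.tendsto_rpow_mul_div (fun x hx => (hLhpos x hx).ne') hCh.ne' rhoh hy)
  have huniform := Metric.tendstoUniformlyOn_iff.1 (tendstoUniformlyOn_Icc_of_monotoneOn hmono
    (continuousOn_id.rpow_const fun _ _ => Or.inr hrhoh.1.le) hpointwise) ε hε
  obtain ⟨x₀, hx₀, hsub⟩ := mem_nhdsGT_iff_exists_Ioc_subset.1 huniform
  refine ⟨x₀, hx₀, fun x hx y hy => ?_⟩
  rw [← Real.dist_eq, dist_comm]
  exact (hsub hx y hy).le

/-- uniform estimate (ineqs) in the proof of Lemma 4.2 of the paper.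
Let `ψ̂ : (0,∞) → (0,∞)` be nondecreasing with `ψ̂(x)/(Ĉ x^ρ̂ L̂(x)) → 1` as `x → 0⁺`
and `ψ̂(0) = 0`. Then for every `b > 0` and `ε > 0` there exists `x₀ > 0` such that for
all `x ∈ (0,x₀]` and `y ∈ [0,b]`, `|ψ̂(xy)/(Ĉ x^ρ̂ L̂(x)) − y^ρ̂| ≤ ε`. -/
theorem uniform_regular_variation_estimate
    (rhoh : ℝ) (hrhoh : rhoh ∈ Set.Ioo (0:ℝ) 1)
    (Ch : ℝ) (hCh : 0 < Ch)
    (Lh : ℝ → ℝ) (hLhpos : ∀ x : ℝ, 0 < x → 0 < Lh x)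
    (hLhsv : SlowlyVaryingAtZero Lh)
    (psih : ℝ → ℝ)
    (hpsih0 : psih 0 = 0)
    (hpsihpos : ∀ x : ℝ, 0 < x → 0 < psih x)
    (hpsihmono : MonotoneOn psih (Set.Ici (0:ℝ)))
    (hpsih : Tendsto (fun x : ℝ => psih x / (Ch * x ^ rhoh * Lh x)) (𝓝[>] 0) (𝓝 1)) :
    ∀ b : ℝ, 0 < b → ∀ ε : ℝ, 0 < ε → ∃ x₀ : ℝ, 0 < x₀ ∧
      ∀ x : ℝ, x ∈ Set.Ioc 0 x₀ → ∀ y : ℝ, y ∈ Set.Icc 0 b →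
        |psih (x * y) / (Ch * x ^ rhoh * Lh x) - y ^ rhoh| ≤ ε :=
  uniform_regular_variation_estimate_general rhoh hrhoh Ch hCh Lh hLhpos hLhsv psih hpsih0 hpsihmono
    hpsih
end
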